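/- arXiv:math/0512629 — 4 statements merged into one kernel-verified Lean document; each statement's English description precedes it below -/
import Mathlib

section
/- Let y be a positive absolutely continuous function on (0,∞) satisfying y'(t) + γ y(t)^ν ≤ δ for a.e. t, where ν > 1, γ > 0 and δ ≥ 0. Then for all t > 0, y(t) ≤ (δ/γ)^(1/ν) + (γ(ν−1)t)^(−1/(ν−1)). -/
/-!
With `K = (δ / γ) ^ (1 / ν)`, so that `γ K ^ ν = δ`, superadditivity of `x ↦ x ^ ν` gives
`δ - γ (K + w + η) ^ ν < -γ w ^ ν` for `w ≥ 0`, `η > 0`. Hence if `w` solves `w' = -γ w ^ ν`,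
a function satisfying `y' + γ y ^ ν ≤ δ` can never cross the barrier `K + w + η` from below.
Taking for `w` the solution `(γ (ν - 1) (t - c)) ^ (-1 / (ν - 1))`, which is infinite at `t = c`,
the barrier starts above `y` just after any `c > 0`; then let `c → 0` and `η → 0`.
-/

open Real Filter Set Topology

noncomputable def ghidagliaProfile (γ ν s : ℝ) : ℝ := (γ * (ν - 1) * s) ^ (-(1 / (ν - 1)))

namespace ghidagliaProfile

variable {γ ν : ℝ}

theorem hasDerivAt (hγ : 0 < γ) (hν : 1 < ν) {s : ℝ} (hs : 0 < s) :
    HasDerivAt (ghidagliaProfile γ ν) (-γ * ghidagliaProfile γ ν s ^ ν) s := by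
  have hν1 : 0 < ν - 1 := by linarith
  have hbase : 0 < γ * (ν - 1) * s := by positivity
  have h := ((hasDerivAt_id' s).const_mul (γ * (ν - 1))).rpow_const
    (p := -(1 / (ν - 1))) (Or.inl hbase.ne')
  have hexp : -(1 / (ν - 1)) - 1 = -(1 / (ν - 1)) * ν := by field_simp; ring
  rw [hexp, rpow_mul hbase.le] at h
  unfold ghidagliaProfile
  convert h using 1
  field_simp

theorem pos (hγ : 0 < γ) (hν : 1 < ν) {s : ℝ} (hs : 0 < s) : 0 < ghidagliaProfile γ ν s :=
  rpow_pos_of_pos (mul_pos (mul_pos hγ (sub_pos.2 hν)) hs) _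

theorem tendsto_atTop (hγ : 0 < γ) (hν : 1 < ν) :
    Tendsto (ghidagliaProfile γ ν) (𝓝[>] 0) atTop := by
  have hc : 0 < γ * (ν - 1) := mul_pos hγ (by linarith)
  have hscale : Tendsto (fun s => γ * (ν - 1) * s) (𝓝[>] 0) (𝓝[>] 0) :=
    tendsto_nhdsWithin_of_tendsto_nhds_of_eventually_within _
      ((continuous_const_mul _).tendsto' 0 0 (mul_zero _) |>.mono_left nhdsWithin_le_nhds)
      (eventually_nhdsWithin_of_forall fun _ hs => mul_pos hc hs)
  exact (tendsto_rpow_neg_nhdsGT_zero (neg_lt_zero.2 (one_div_pos.2 (by linarith)))).comp hscale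

theorem eventually_le_sub (hγ : 0 < γ) (hν : 1 < ν) {f : ℝ → ℝ} {c : ℝ}
    (hf : ContinuousAt f c) :
    ∀ᶠ a in 𝓝[>] c, f a ≤ ghidagliaProfile γ ν (a - c) := by
  have hshift : Tendsto (fun a => a - c) (𝓝[>] c) (𝓝[>] 0) :=
    tendsto_nhdsWithin_of_tendsto_nhds_of_eventually_within _
      ((continuous_sub_right c).tendsto' c 0 (sub_self c) |>.mono_left nhdsWithin_le_nhds)
      (eventually_nhdsWithin_of_forall fun _ ha => mem_Ioi.2 (sub_pos.2 ha))
  filter_upwards [((tendsto_atTop hγ hν).comp hshift).eventually_ge_atTop (f c + 1),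
    nhdsWithin_le_nhds (hf.eventually (gt_mem_nhds (lt_add_one (f c))))] with a hprofile hfa
  exact hfa.le.trans hprofile

end ghidagliaProfile

theorem rpow_add_lt_rpow_add_add {p a b η : ℝ} (ha : 0 ≤ a) (hb : 0 ≤ b) (hη : 0 < η)
    (hp : 1 ≤ p) :
    a ^ p + b ^ p < (a + b + η) ^ p :=
  (add_rpow_le_rpow_add ha hb hp).trans_lt <|
    rpow_lt_rpow (by positivity) (lt_add_of_pos_right _ hη) (by linarith)

theorem le_add_ghidagliaProfile_of_deriv_add_rpow_le {y y' : ℝ → ℝ} {γ ν K η a b c : ℝ}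
    (hγ : 0 < γ) (hν : 1 < ν) (hK : 0 ≤ K) (hη : 0 < η) (hca : c < a) (hab : a ≤ b)
    (hy : ∀ x ∈ Icc a b, HasDerivAt y (y' x) x)
    (hineq : ∀ x ∈ Ico a b, y' x + γ * y x ^ ν ≤ γ * K ^ ν)
    (hstart : y a ≤ K + ghidagliaProfile γ ν (a - c) + η) :
    y b ≤ K + ghidagliaProfile γ ν (b - c) + η := by
  set B := fun x => K + ghidagliaProfile γ ν (x - c) + η
  have hB : ∀ x ∈ Icc a b, HasDerivAt B (-γ * ghidagliaProfile γ ν (x - c) ^ ν) x := fun x hx =>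
    (((ghidagliaProfile.hasDerivAt hγ hν (sub_pos.2 (hca.trans_le hx.1))).comp_sub_const
      x c).const_add K).add_const η
  refine image_le_of_deriv_right_lt_deriv_boundary'
    (fun x hx => (hy x hx).continuousAt.continuousWithinAt)
    (fun x hx => (hy x (Ico_subset_Icc_self hx)).hasDerivWithinAt) hstart
    (fun x hx => (hB x hx).continuousAt.continuousWithinAt)
    (fun x hx => (hB x (Ico_subset_Icc_self hx)).hasDerivWithinAt)
    (fun x hx hyB => ?_) ⟨hab, le_rfl⟩
  have hgap := mul_lt_mul_of_pos_left (rpow_add_lt_rpow_add_add hK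
    (ghidagliaProfile.pos hγ hν (sub_pos.2 (hca.trans_le hx.1))).le hη hν.le) hγ
  have hyx : y x = K + ghidagliaProfile γ ν (x - c) + η := hyB
  have hderiv := hineq x hx
  rw [hyx] at hderiv
  linarith

theorem ghidaglia_inequality_general (y : ℝ → ℝ) (γ δ ν : ℝ)
    (hν : 1 < ν) (hγ : 0 < γ) (hδ : 0 ≤ δ)
    (hdiff : ∀ t, 0 < t → DifferentiableAt ℝ y t)
    (hineq : ∀ t, 0 < t → deriv y t + γ * (y t) ^ ν ≤ δ) :
    ∀ t, 0 < t →
      y t ≤ (δ / γ) ^ (1 / ν) + (γ * (ν - 1) * t) ^ (-(1 / (ν - 1))) := by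
  intro t ht
  set K := (δ / γ) ^ (1 / ν)
  have hK : 0 ≤ K := rpow_nonneg (div_nonneg hδ hγ.le) _
  have hKν : γ * K ^ ν = δ := by
    rw [← rpow_mul (div_nonneg hδ hγ.le), one_div_mul_cancel (by linarith), rpow_one,
      mul_div_cancel₀ _ hγ.ne']
  refine le_of_forall_pos_le_add fun η hη => ?_
  have hbarrier : ∀ c ∈ Ioo 0 t, y t ≤ K + ghidagliaProfile γ ν (t - c) + η := by
    rintro c ⟨hc, hct⟩
    obtain ⟨a, hya, hca, hat⟩ := ((ghidagliaProfile.eventually_le_sub hγ hν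
      (hdiff c hc).continuousAt).and (Ioo_mem_nhdsGT hct)).exists
    refine le_add_ghidagliaProfile_of_deriv_add_rpow_le hγ hν hK hη hca hat.le
      (fun x hx => (hdiff x (hc.trans (hca.trans_le hx.1))).hasDerivAt)
      (fun x hx => hKν ▸ hineq x (hc.trans (hca.trans_le hx.1))) (by linarith)
  have hlim : Tendsto (fun c => K + ghidagliaProfile γ ν (t - c) + η) (𝓝[>] 0)
      (𝓝 (K + ghidagliaProfile γ ν t + η)) := by
    have hcont : ContinuousAt (fun c => ghidagliaProfile γ ν (t - c)) 0 :=
      (ghidagliaProfile.hasDerivAt hγ hν ht).continuousAt.comp_of_eq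
        (continuous_sub_left t).continuousAt (sub_zero t)
    simpa using ((hcont.const_add K).add_const η).tendsto.mono_left nhdsWithin_le_nhds
  refine ge_of_tendsto hlim ?_
  filter_upwards [Ioo_mem_nhdsGT ht] with c hc using hbarrier c hc

/-- Ghidaglia inequality. -/
theorem ghidaglia_inequality (y : ℝ → ℝ) (γ δ ν : ℝ)
    (hν : 1 < ν) (hγ : 0 < γ) (hδ : 0 ≤ δ)
    (hpos : ∀ t, 0 < t → 0 < y t)
    (hdiff : ∀ t, 0 < t → DifferentiableAt ℝ y t)
    (hineq : ∀ t, 0 < t → deriv y t + γ * (y t) ^ ν ≤ δ) :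
    ∀ t, 0 < t →
      y t ≤ (δ / γ) ^ (1 / ν) + (γ * (ν - 1) * t) ^ (-(1 / (ν - 1))) :=
  ghidaglia_inequality_general y γ δ ν hν hγ hδ hdiff hineq
end

section
/- Let y be a nonnegative differentiable function on (0,∞) satisfying y'(t) + γ y(t)^ν ≤ δ with ν > 1, γ > 0, δ ≥ 0. Then limsup as t → ∞ of y(t) is at most (δ/γ)^(1/ν). -/
open Real Filter Set

private lemma ghidaglia_barrier (y : ℝ → ℝ) (γ δ ν M : ℝ)
    (hν : 1 < ν) (hγ : 0 < γ)
    (hdiff : ∀ t, 0 < t → DifferentiableAt ℝ y t)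
    (hineq : ∀ t, 0 < t → deriv y t + γ * (y t) ^ ν ≤ δ)
    (hM0 : 0 ≤ M) (hMneg : δ - γ * M ^ ν < 0)
    {t1 t2 : ℝ} (ht1 : 0 < t1) (hy1 : y t1 ≤ M) (h12 : t1 ≤ t2) :
    y t2 ≤ M := by
  by_contra h
  push_neg at h
  have ht12 : t1 < t2 := by
    rcases lt_or_eq_of_le h12 with h' | h'
    · exact h'
    · exact absurd (h' ▸ hy1) (not_le.mpr h)
  have hcont : ContinuousOn y (Icc t1 t2) := fun s hs =>
    (hdiff s (lt_of_lt_of_le ht1 hs.1)).continuousAt.continuousWithinAt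
  set S : Set ℝ := Icc t1 t2 ∩ y ⁻¹' (Iic M) with hS
  have hSne : S.Nonempty := ⟨t1, ⟨le_refl _, h12⟩, hy1⟩
  have hSbdd : BddAbove S := ⟨t2, fun s hs => hs.1.2⟩
  have hSclosed : IsClosed S :=
    hcont.preimage_isClosed_of_isClosed isClosed_Icc isClosed_Iic
  set s0 := sSup S with hs0
  have hs0S : s0 ∈ S := hSclosed.csSup_mem hSne hSbdd
  have hs0t2 : s0 < t2 := by
    rcases lt_or_eq_of_le hs0S.1.2 with h' | h'
    · exact h'
    · exact absurd (h' ▸ hs0S.2) (not_le.mpr h)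
  have hbig : ∀ s, s0 < s → s ≤ t2 → M < y s := by
    intro s hs hs2
    by_contra hc
    push_neg at hc
    have : s ∈ S := ⟨⟨le_trans hs0S.1.1 hs.le, hs2⟩, hc⟩
    exact absurd (le_csSup hSbdd this) (not_le.mpr hs)
  have hanti : StrictAntiOn y (Icc s0 t2) := by
    apply strictAntiOn_of_deriv_neg (convex_Icc _ _)
    · exact hcont.mono (Icc_subset_Icc hs0S.1.1 le_rfl)
    · intro x hx
      rw [interior_Icc] at hx
      have hx0 : 0 < x := lt_of_lt_of_le ht1 (le_trans hs0S.1.1 hx.1.le)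
      have hyx : M < y x := hbig x hx.1 hx.2.le
      have hpow : M ^ ν ≤ (y x) ^ ν :=
        Real.rpow_le_rpow hM0 hyx.le (by linarith)
      have := hineq x hx0
      nlinarith [hγ.le, mul_le_mul_of_nonneg_left hpow hγ.le]
  have hlt : y t2 < y s0 := hanti ⟨le_rfl, hs0t2.le⟩ ⟨hs0t2.le, le_rfl⟩ hs0t2
  have := hs0S.2
  simp only [Set.mem_preimage, Set.mem_Iic] at this
  linarith

theorem ghidaglia_descent (y : ℝ → ℝ) (γ δ ν M : ℝ)
    (hν : 1 < ν) (hγ : 0 < γ)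
    (hnonneg : ∀ t, 0 < t → 0 ≤ y t)
    (hdiff : ∀ t, 0 < t → DifferentiableAt ℝ y t)
    (hineq : ∀ t, 0 < t → deriv y t + γ * (y t) ^ ν ≤ δ)
    (hM0 : 0 ≤ M) (hMneg : δ - γ * M ^ ν < 0)
    {t1 : ℝ} (ht1 : 0 < t1) :
    ∃ t2, t1 ≤ t2 ∧ y t2 ≤ M := by
  by_contra h
  push_neg at h
  set c := γ * M ^ ν - δ with hc
  have hc0 : 0 < c := by linarith
  set T := t1 + (y t1) / c + 1 with hT
  have hy10 : 0 ≤ y t1 := hnonneg t1 ht1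
  have hTt1 : t1 < T := by
    have h1 : 0 ≤ y t1 / c := div_nonneg hy10 hc0.le
    rw [hT]; linarith
  have hT0 : 0 < T := lt_trans ht1 hTt1
  obtain ⟨x, hx, hslope⟩ := exists_deriv_eq_slope y hTt1
    (fun s hs => (hdiff s (lt_of_lt_of_le ht1 hs.1)).continuousAt.continuousWithinAt)
    (fun s hs => ((hdiff s (lt_trans ht1 hs.1)).differentiableWithinAt))
  have hx0 : 0 < x := lt_trans ht1 hx.1
  have hyx : M < y x := h x hx.1.le
  have hpow : M ^ ν ≤ (y x) ^ ν :=
    Real.rpow_le_rpow hM0 hyx.le (by linarith)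
  have hd : deriv y x ≤ -c := by
    have := hineq x hx0
    nlinarith [mul_le_mul_of_nonneg_left hpow hγ.le]
  rw [hslope] at hd
  have hTt1' : 0 < T - t1 := by linarith
  have : y T - y t1 ≤ -c * (T - t1) := by
    calc y T - y t1 = (y T - y t1) / (T - t1) * (T - t1) := by field_simp
    _ ≤ -c * (T - t1) := by
        apply mul_le_mul_of_nonneg_right hd hTt1'.le
  have hcT : -c * (T - t1) = -(y t1) - c := by
    rw [hT]; field_simp; ring
  have hyT : 0 ≤ y T := hnonneg T hT0
  rw [hcT] at this
  linarith

/-- Asymptotic bound from the Ghidaglia inequality. -/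
theorem limsup_le_of_ghidaglia (y : ℝ → ℝ) (γ δ ν : ℝ)
    (hν : 1 < ν) (hγ : 0 < γ) (hδ : 0 ≤ δ)
    (hnonneg : ∀ t, 0 < t → 0 ≤ y t)
    (hdiff : ∀ t, 0 < t → DifferentiableAt ℝ y t)
    (hineq : ∀ t, 0 < t → deriv y t + γ * (y t) ^ ν ≤ δ) :
    Filter.limsup y Filter.atTop ≤ (δ / γ) ^ (1 / ν) := by
  set R := (δ / γ) ^ (1 / ν) with hR
  have hν0 : (0:ℝ) < ν := by linarith
  have hR0 : 0 ≤ R := Real.rpow_nonneg (div_nonneg hδ hγ.le) _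
  have hRν : R ^ ν = δ / γ := by
    rw [hR, ← Real.rpow_mul (div_nonneg hδ hγ.le), one_div_mul_cancel (ne_of_gt hν0),
      Real.rpow_one]
  have hcobdd : IsCoboundedUnder (· ≤ ·) atTop y :=
    isCoboundedUnder_le_of_eventually_le atTop
      (x := 0) (by filter_upwards [eventually_gt_atTop 0] with t ht using hnonneg t ht)
  apply le_of_forall_pos_le_add
  intro ε hε
  set M := R + ε with hM
  have hM0 : 0 ≤ M := by linarith
  have hMν : δ / γ < M ^ ν := by
    rw [← hRν]
    exact Real.rpow_lt_rpow hR0 (by linarith) hν0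
  have hMneg : δ - γ * M ^ ν < 0 := by
    have := (div_lt_iff₀ hγ).mp hMν
    nlinarith
  obtain ⟨t2, ht2, hy2⟩ := ghidaglia_descent y γ δ ν M hν hγ hnonneg hdiff hineq hM0 hMneg
    (t1 := 1) one_pos
  have ht20 : 0 < t2 := lt_of_lt_of_le one_pos ht2
  have hev : ∀ᶠ t in atTop, y t ≤ M := by
    filter_upwards [eventually_ge_atTop t2] with t ht
    exact ghidaglia_barrier y γ δ ν M hν hγ hdiff hineq hM0 hMneg ht20 hy2 ht
  exact limsup_le_of_le hcobdd hev
end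

section
/- Let f : ℝ → ℝ satisfy σ ≤ f(ξ) ≤ c₁ |ξ|^{α+1} + c₂ for all ξ, with positive constants σ, c₁, c₂, α. Let Ω be a bounded measurable set with |Ω| > 0, and let u₁, u₂ : Ω → ℝ be bounded measurable functions with f Lipschitz with constant L on the range of u₁ and u₂. Then the map F(u) = f(u)/(∫_Ω f(u) dx)² satisfies ‖F(u₁) − F(u₂)‖_{L²(Ω)} ≤ C ‖u₁ − u₂‖_{L²(Ω)} for a constant C depending only on L, σ, |Ω|, and the L^∞ bounds of u₁, u₂. -/
/-!
Both integrals `I(uᵢ) = ∫_Ω f(uᵢ)` lie in `[σ|Ω|, K|Ω|]`, where `K` bounds `f` on the compact range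
`[-M, M]`. Writing
`f(u₁)/I₁² - f(u₂)/I₂² = (f(u₁) - f(u₂))/I₁² + f(u₂)(I₂ + I₁)(I₂ - I₁)/(I₁² I₂²)`,
the first term is pointwise at most `L|u₁ - u₂|/(σ|Ω|)²`, and the second is a constant multiple of
`|I₁ - I₂| ≤ L‖u₁ - u₂‖_{L¹} ≤ L|Ω|^{1/2}‖u₁ - u₂‖_{L²}`. Taking `L²` norms of the pointwise bound
gives the estimate.
-/

open MeasureTheory Set
open scoped ENNReal NNReal

lemma abs_div_sq_sub_div_sq_le {a b I₁ I₂ s T K : ℝ} (hs : 0 < s) (hI₁ : I₁ ∈ Icc s T)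
    (hI₂ : I₂ ∈ Icc s T) (hb : |b| ≤ K) :
    |a / I₁ ^ 2 - b / I₂ ^ 2| ≤ |a - b| / s ^ 2 + 2 * K * T * |I₁ - I₂| / s ^ 4 := by
  obtain ⟨hsI₁, hI₁T⟩ := hI₁
  obtain ⟨hsI₂, hI₂T⟩ := hI₂
  have hI₁0 : 0 < I₁ := hs.trans_le hsI₁
  have hI₂0 : 0 < I₂ := hs.trans_le hsI₂
  have hsplit : a / I₁ ^ 2 - b / I₂ ^ 2
      = (a - b) / I₁ ^ 2 + b * (I₂ + I₁) * (I₂ - I₁) / (I₁ ^ 2 * I₂ ^ 2) := by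
    field_simp
    ring
  have hfirst : |(a - b) / I₁ ^ 2| ≤ |a - b| / s ^ 2 := by
    rw [abs_div, abs_of_pos (pow_pos hI₁0 2)]
    gcongr
  have hsecond : |b * (I₂ + I₁) * (I₂ - I₁) / (I₁ ^ 2 * I₂ ^ 2)|
      ≤ 2 * K * T * |I₁ - I₂| / s ^ 4 := by
    rw [abs_div, abs_mul, abs_mul, abs_of_pos (by positivity : 0 < I₁ ^ 2 * I₂ ^ 2),
      abs_of_pos (by positivity : 0 < I₂ + I₁), abs_sub_comm]
    have hK : 0 ≤ K := (abs_nonneg b).trans hb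
    have hnum : |b| * (I₂ + I₁) * |I₁ - I₂| ≤ K * (2 * T) * |I₁ - I₂| := by
      gcongr
      linarith
    have hnum0 : 0 ≤ K * (2 * T) * |I₁ - I₂| :=
      mul_nonneg (mul_nonneg hK (by linarith)) (abs_nonneg _)
    calc |b| * (I₂ + I₁) * |I₁ - I₂| / (I₁ ^ 2 * I₂ ^ 2)
        ≤ K * (2 * T) * |I₁ - I₂| / (s ^ 2 * s ^ 2) :=
          div_le_div₀ hnum0 hnum (by positivity) (by gcongr)
      _ = 2 * K * T * |I₁ - I₂| / s ^ 4 := by ring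
  rw [hsplit]
  exact (abs_add_le _ _).trans (add_le_add hfirst hsecond)

section

variable {X : Type*} [MeasurableSpace X] {μ : Measure X}

lemma LipschitzOnWith.aestronglyMeasurable_comp {Y : Type*} [PseudoMetricSpace Y] {f : Y → ℝ}
    {s : Set Y} {L : ℝ≥0} (hf : LipschitzOnWith L f s) {u : X → Y}
    (hu : AEStronglyMeasurable u μ) (hus : ∀ᵐ x ∂μ, u x ∈ s) :
    AEStronglyMeasurable (fun x => f (u x)) μ := by
  obtain ⟨g, hg, hfg⟩ := hf.extend_real
  exact (hg.continuous.comp_aestronglyMeasurable hu).congr (hus.mono fun x hx => (hfg hx).symm)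

lemma integral_mem_Icc_of_ae_mem_Icc [IsFiniteMeasure μ] {v : X → ℝ} {a b : ℝ}
    (hv : Integrable v μ) (hab : ∀ᵐ x ∂μ, v x ∈ Icc a b) :
    ∫ x, v x ∂μ ∈ Icc (μ.real univ * a) (μ.real univ * b) := by
  rw [← smul_eq_mul, ← smul_eq_mul, ← integral_const, ← integral_const]
  exact ⟨integral_mono_ae (integrable_const a) hv (hab.mono fun x hx => hx.1),
    integral_mono_ae hv (integrable_const b) (hab.mono fun x hx => hx.2)⟩

lemma integral_norm_le_measureReal_rpow_mul_eLpNorm [IsFiniteMeasure μ] {E : Type*}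
    [NormedAddCommGroup E] {p : ℝ≥0∞} (hp : 1 ≤ p) {g : X → E} (hg : MemLp g p μ) :
    ∫ x, ‖g x‖ ∂μ ≤ μ.real univ ^ (1 - 1 / p.toReal) * (eLpNorm g p μ).toReal := by
  have h := eLpNorm_le_eLpNorm_mul_rpow_measure_univ hp hg.aestronglyMeasurable
  rw [eLpNorm_one_eq_lintegral_enorm, ← ofReal_integral_norm_eq_lintegral_enorm
    (hg.integrable hp), ENNReal.toReal_one, div_one] at h
  have hexp : 0 ≤ 1 - 1 / p.toReal := by
    rcases eq_or_ne p ∞ with rfl | hp_top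
    · simp
    · rw [sub_nonneg]
      exact div_le_one_of_le₀ (ENNReal.toReal_one ▸ ENNReal.toReal_mono hp_top hp)
        ENNReal.toReal_nonneg
  have h' := ENNReal.toReal_mono (ENNReal.mul_ne_top hg.eLpNorm_ne_top
    (ENNReal.rpow_ne_top_of_nonneg hexp (measure_ne_top μ univ))) h
  rw [ENNReal.toReal_ofReal (integral_nonneg fun x => norm_nonneg _), ENNReal.toReal_mul,
    ← ENNReal.toReal_rpow] at h'
  rw [mul_comm]
  exact h'

lemma eLpNorm_le_ofReal_of_ae_abs_le_mul_add_const [IsFiniteMeasure μ] {p : ℝ≥0∞} (hp : 1 ≤ p)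
    (hp_top : p ≠ ∞) {w d : X → ℝ} {A B : ℝ} (hA : 0 ≤ A) (hB : 0 ≤ B) (hd : MemLp d p μ)
    (h : ∀ᵐ x ∂μ, |w x| ≤ A * |d x| + B) :
    eLpNorm w p μ ≤
      ENNReal.ofReal (A * (eLpNorm d p μ).toReal + B * μ.real univ ^ (1 / p.toReal)) := by
  have hp0 : p ≠ 0 := (zero_lt_one.trans_le hp).ne'
  have hmajorant : eLpNorm w p μ ≤ eLpNorm (fun x => A * |d x| + B) p μ :=
    eLpNorm_mono_ae_real (h.mono fun x hx => by rwa [Real.norm_eq_abs])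
  have hlinear : eLpNorm (fun x => A * |d x|) p μ = ENNReal.ofReal A * eLpNorm d p μ := by
    change eLpNorm (A • fun x => ‖d x‖) p μ = _
    rw [eLpNorm_const_smul, eLpNorm_norm, Real.enorm_eq_ofReal hA]
  have hconst :
      eLpNorm (fun _ : X => B) p μ = ENNReal.ofReal (B * μ.real univ ^ (1 / p.toReal)) := by
    rw [eLpNorm_const' B hp0 hp_top, Real.enorm_eq_ofReal hB, ← ofReal_measureReal,
      ENNReal.ofReal_rpow_of_nonneg measureReal_nonneg (by positivity), ENNReal.ofReal_mul hB]
  calc eLpNorm w p μ ≤ eLpNorm (fun x => A * |d x|) p μ + eLpNorm (fun _ : X => B) p μ :=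
        hmajorant.trans (eLpNorm_add_le (hd.1.norm.const_mul A) aestronglyMeasurable_const hp)
    _ = ENNReal.ofReal (A * (eLpNorm d p μ).toReal + B * μ.real univ ^ (1 / p.toReal)) := by
        rw [hlinear, hconst, ENNReal.ofReal_add (by positivity) (by positivity),
          ENNReal.ofReal_mul hA, ENNReal.ofReal_toReal hd.eLpNorm_ne_top]

lemma abs_integral_sub_integral_le_of_ae_abs_sub_le [IsFiniteMeasure μ] {v₁ v₂ d : X → ℝ}
    {L : ℝ≥0} (hv₁ : Integrable v₁ μ) (hv₂ : Integrable v₂ μ) (hd : MemLp d 2 μ)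
    (h : ∀ᵐ x ∂μ, |v₁ x - v₂ x| ≤ L * |d x|) :
    |∫ x, v₁ x ∂μ - ∫ x, v₂ x ∂μ| ≤ L * (μ.real univ ^ (1 / 2 : ℝ) * (eLpNorm d 2 μ).toReal) := by
  have hL1L2 := integral_norm_le_measureReal_rpow_mul_eLpNorm one_le_two hd
  norm_num at hL1L2
  rw [← integral_sub hv₁ hv₂]
  calc |∫ x, v₁ x - v₂ x ∂μ| ≤ ∫ x, |v₁ x - v₂ x| ∂μ := abs_integral_le_integral_abs
    _ ≤ ∫ x, L * |d x| ∂μ :=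
        integral_mono_ae (hv₁.sub hv₂).abs ((hd.integrable one_le_two).abs.const_mul _) h
    _ ≤ L * (μ.real univ ^ (1 / 2 : ℝ) * (eLpNorm d 2 μ).toReal) := by
        rw [integral_const_mul]
        gcongr

noncomputable def nonlocalNonlinearity (μ : Measure X) (f : ℝ → ℝ) (u : X → ℝ) : X → ℝ :=
  fun x => f (u x) / (∫ y, f (u y) ∂μ) ^ 2

theorem eLpNorm_nonlocalNonlinearity_sub_le [IsFiniteMeasure μ] {f : ℝ → ℝ} {s : Set ℝ}
    {σ K : ℝ} {L : ℝ≥0} (hσ : 0 < σ) (hμ : 0 < μ.real univ) (hf : ∀ ξ ∈ s, f ξ ∈ Icc σ K)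
    (hLip : LipschitzOnWith L f s) {u₁ u₂ : X → ℝ} (hu₁ : AEStronglyMeasurable u₁ μ)
    (hu₂ : AEStronglyMeasurable u₂ μ) (hs₁ : ∀ᵐ x ∂μ, u₁ x ∈ s) (hs₂ : ∀ᵐ x ∂μ, u₂ x ∈ s)
    (hd : MemLp (u₁ - u₂) 2 μ) :
    eLpNorm (nonlocalNonlinearity μ f u₁ - nonlocalNonlinearity μ f u₂) 2 μ ≤
      ENNReal.ofReal (L / (μ.real univ * σ) ^ 2 * (1 + 2 * (K / σ) ^ 2)) *
        eLpNorm (u₁ - u₂) 2 μ := by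
  set m := μ.real univ
  set D := (eLpNorm (u₁ - u₂) 2 μ).toReal
  have hcomp : ∀ {u : X → ℝ}, AEStronglyMeasurable u μ → (∀ᵐ x ∂μ, u x ∈ s) →
      Integrable (fun x => f (u x)) μ ∧ ∫ x, f (u x) ∂μ ∈ Icc (m * σ) (m * K) := by
    intro u hu hus
    have hbounds : ∀ᵐ x ∂μ, f (u x) ∈ Icc σ K := hus.mono fun x hx => hf _ hx
    have hint : Integrable (fun x => f (u x)) μ :=
      .of_bound (hLip.aestronglyMeasurable_comp hu hus) K
        (hbounds.mono fun x hx => abs_le.2 ⟨by linarith [hx.1, hx.2], hx.2⟩)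
    exact ⟨hint, integral_mem_Icc_of_ae_mem_Icc hint hbounds⟩
  obtain ⟨hint₁, hI₁⟩ := hcomp hu₁ hs₁
  obtain ⟨hint₂, hI₂⟩ := hcomp hu₂ hs₂
  have hK : 0 ≤ K := hσ.le.trans (le_of_mul_le_mul_left (hI₁.1.trans hI₁.2) hμ)
  have hLipae : ∀ᵐ x ∂μ, |f (u₁ x) - f (u₂ x)| ≤ L * |(u₁ - u₂) x| := by
    filter_upwards [hs₁, hs₂] with x h₁ h₂
    simpa [Real.dist_eq] using hLip.dist_le_mul _ h₁ _ h₂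
  have hIdiff := abs_integral_sub_integral_le_of_ae_abs_sub_le hint₁ hint₂ hd hLipae
  have hpt : ∀ᵐ x ∂μ, |(nonlocalNonlinearity μ f u₁ - nonlocalNonlinearity μ f u₂) x| ≤
      L / (m * σ) ^ 2 * |(u₁ - u₂) x| +
        2 * K * (m * K) * (L * (m ^ (1 / 2 : ℝ) * D)) / (m * σ) ^ 4 := by
    filter_upwards [hs₁, hs₂, hLipae] with x h₁ h₂ hx
    refine (abs_div_sq_sub_div_sq_le (by positivity) hI₁ hI₂
      (abs_le.2 ⟨by linarith [(hf _ h₂).1], (hf _ h₂).2⟩)).trans ?_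
    calc _ ≤ L * |(u₁ - u₂) x| / (m * σ) ^ 2 +
          2 * K * (m * K) * (L * (m ^ (1 / 2 : ℝ) * D)) / (m * σ) ^ 4 := by gcongr
      _ = _ := by ring
  refine (eLpNorm_le_ofReal_of_ae_abs_le_mul_add_const one_le_two ENNReal.ofNat_ne_top
    (by positivity) (by positivity) hd hpt).trans_eq ?_
  conv_rhs =>
    rw [← ENNReal.ofReal_toReal hd.eLpNorm_ne_top, ← ENNReal.ofReal_mul (by positivity)]
  congr 1
  have hsqrt : m ^ (1 / 2 : ℝ) * m ^ (1 / 2 : ℝ) = m := by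
    rw [← Real.sqrt_eq_rpow, Real.mul_self_sqrt hμ.le]
  rw [ENNReal.toReal_ofNat]
  field_simp
  linear_combination 2 * L * K ^ 2 * D * hsqrt

end

theorem nonlocal_nonlinearity_lipschitz_general (N : ℕ)
    (Ω : Set (EuclideanSpace ℝ (Fin N)))
    (hΩmeas : MeasurableSet Ω) (hΩbdd : Bornology.IsBounded Ω)
    (hΩpos : 0 < (volume Ω).toReal)
    (f : ℝ → ℝ) (σ c₁ c₂ α : ℝ)
    (hσ : 0 < σ)
    (hf : ∀ ξ : ℝ, σ ≤ f ξ ∧ f ξ ≤ c₁ * |ξ| ^ (α + 1) + c₂)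
    (L : NNReal) (M : ℝ)
    (hLip : LipschitzOnWith L f (Set.Icc (-M) M)) :
    ∃ C : ℝ, 0 ≤ C ∧
      ∀ u₁ u₂ : EuclideanSpace ℝ (Fin N) → ℝ,
        Measurable u₁ → Measurable u₂ →
        (∀ x ∈ Ω, |u₁ x| ≤ M) → (∀ x ∈ Ω, |u₂ x| ≤ M) →
        eLpNorm
            (fun x => f (u₁ x) / (∫ y in Ω, f (u₁ y)) ^ 2
              - f (u₂ x) / (∫ y in Ω, f (u₂ y)) ^ 2) 2 (volume.restrict Ω)
          ≤ ENNReal.ofReal C *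
            eLpNorm (fun x => u₁ x - u₂ x) 2 (volume.restrict Ω) := by
  obtain ⟨K, hK⟩ := isCompact_Icc.exists_bound_of_continuousOn hLip.continuousOn
  have : IsFiniteMeasure (volume.restrict Ω) :=
    isFiniteMeasure_restrict.2 hΩbdd.measure_lt_top.ne
  have hμ : 0 < (volume.restrict Ω).real univ := by rwa [measureReal_restrict_apply_univ]
  refine ⟨L / ((volume.restrict Ω).real univ * σ) ^ 2 * (1 + 2 * (K / σ) ^ 2), by positivity,
    fun u₁ u₂ hu₁ hu₂ hM₁ hM₂ => ?_⟩
  have hmem : ∀ u : EuclideanSpace ℝ (Fin N) → ℝ, (∀ x ∈ Ω, |u x| ≤ M) →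
      ∀ᵐ x ∂volume.restrict Ω, u x ∈ Icc (-M) M :=
    fun u hu => ae_restrict_of_forall_mem hΩmeas fun x hx => abs_le.1 (hu x hx)
  have hd : MemLp (u₁ - u₂) 2 (volume.restrict Ω) :=
    (MemLp.of_bound hu₁.aestronglyMeasurable M (ae_restrict_of_forall_mem hΩmeas hM₁)).sub
      (MemLp.of_bound hu₂.aestronglyMeasurable M (ae_restrict_of_forall_mem hΩmeas hM₂))
  exact eLpNorm_nonlocalNonlinearity_sub_le hσ hμ
    (fun ξ hξ => ⟨(hf ξ).1, (abs_le.1 (hK ξ hξ)).2⟩) hLip hu₁.aestronglyMeasurable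
    hu₂.aestronglyMeasurable (hmem u₁ hM₁) (hmem u₂ hM₂) hd

/-- Local Lipschitz property of the nonlocal nonlinearity
`F u = f(u) / (∫_Ω f(u))²` in `L²(Ω)`. -/
theorem nonlocal_nonlinearity_lipschitz (N : ℕ)
    (Ω : Set (EuclideanSpace ℝ (Fin N)))
    (hΩmeas : MeasurableSet Ω) (hΩbdd : Bornology.IsBounded Ω)
    (hΩpos : 0 < (volume Ω).toReal)
    (f : ℝ → ℝ) (σ c₁ c₂ α : ℝ)
    (hσ : 0 < σ) (hc₁ : 0 < c₁) (hc₂ : 0 < c₂) (hα : 0 < α)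
    (hf : ∀ ξ : ℝ, σ ≤ f ξ ∧ f ξ ≤ c₁ * |ξ| ^ (α + 1) + c₂)
    (L : NNReal) (M : ℝ) (hM : 0 ≤ M)
    (hLip : LipschitzOnWith L f (Set.Icc (-M) M)) :
    ∃ C : ℝ, 0 ≤ C ∧
      ∀ u₁ u₂ : EuclideanSpace ℝ (Fin N) → ℝ,
        Measurable u₁ → Measurable u₂ →
        (∀ x ∈ Ω, |u₁ x| ≤ M) → (∀ x ∈ Ω, |u₂ x| ≤ M) →
        eLpNorm
            (fun x => f (u₁ x) / (∫ y in Ω, f (u₁ y)) ^ 2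
              - f (u₂ x) / (∫ y in Ω, f (u₂ y)) ^ 2) 2 (volume.restrict Ω)
          ≤ ENNReal.ofReal C *
            eLpNorm (fun x => u₁ x - u₂ x) 2 (volume.restrict Ω) :=
  nonlocal_nonlinearity_lipschitz_general N Ω hΩmeas hΩbdd hΩpos f σ c₁ c₂ α hσ hf L M hLip
end

section
/- Let a, b > 0, ν = (k₀+p)/(k₀+2) with p > 2 and k₀ ≥ 0 (so ν > 1). If y : (0,∞) → ℝ is positive, absolutely continuous, and satisfies y' + a y^ν ≤ b, then for every τ > 0 there is a constant c(τ, a, b, ν), independent of y, such that y(t) ≤ c(τ, a, b, ν) for all t ≥ τ. -/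
/-! Let `K` be the level with `a K^ν = 2b`. At or above `K` the inequality gives `y' ≤ -b < 0`, so
`y` cannot cross `K` upwards; and while `y ≥ K` it gives `y' ≤ -(a/2) y^ν`, so `y^(1-ν)` grows at
rate at least `(ν-1)a/2`. On `[t/2, t]` either `y` has already dropped to `K`, and then
`y t ≤ K`, or `y t ^ (1-ν) ≥ (ν-1) a t / 4`, which bounds `y t` whatever `y` was initially. -/

open Real Set

theorem le_of_deriv_neg_at_level {f : ℝ → ℝ} {K s t : ℝ} (hst : s ≤ t)
    (hf : ∀ u ∈ Icc s t, DifferentiableAt ℝ f u)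
    (hneg : ∀ u ∈ Ico s t, f u = K → deriv f u < 0) (hs : f s ≤ K) : f t ≤ K :=
  image_le_of_deriv_right_lt_deriv_boundary (B := fun _ ↦ K) (B' := 0)
    (fun u hu ↦ (hf u hu).continuousAt.continuousWithinAt)
    (fun u hu ↦ (hf u (Ico_subset_Icc_self hu)).hasDerivAt.hasDerivWithinAt) hs
    (fun _ ↦ hasDerivAt_const _ _) hneg ⟨hst, le_rfl⟩

section Ghidaglia

variable {a b ν : ℝ}

theorem half_mul_le_deriv_mul_div {D Y : ℝ} (hν : 1 < ν) (hY : 0 < Y)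
    (hD : D + a * Y ≤ b) (hbY : 2 * b ≤ a * Y) :
    (ν - 1) * a / 2 ≤ D * (1 - ν) / Y := by
  rw [le_div_iff₀ hY]
  nlinarith

theorem sub_mul_le_rpow_one_sub_sub {f : ℝ → ℝ} {s t : ℝ} (hν : 1 < ν) (hst : s ≤ t)
    (hpos : ∀ u ∈ Icc s t, 0 < f u) (hf : ∀ u ∈ Icc s t, DifferentiableAt ℝ f u)
    (hineq : ∀ u ∈ Icc s t, deriv f u + a * f u ^ ν ≤ b)
    (hlarge : ∀ u ∈ Icc s t, 2 * b ≤ a * f u ^ ν) :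
    (ν - 1) * a / 2 * (t - s) ≤ f t ^ (1 - ν) - f s ^ (1 - ν) := by
  set m := (ν - 1) * a / 2
  have hderiv : ∀ u ∈ Icc s t, HasDerivAt (fun x ↦ f x ^ (1 - ν) - m * x)
      (deriv f u * (1 - ν) * f u ^ (-ν) - m) u := fun u hu ↦ by
    simpa using ((hf u hu).hasDerivAt.rpow_const (p := 1 - ν) (Or.inl (hpos u hu).ne')).fun_sub
      ((hasDerivAt_id u).const_mul m)
  have hmono : MonotoneOn (fun x ↦ f x ^ (1 - ν) - m * x) (Icc s t) := by
    refine monotoneOn_of_deriv_nonneg (convex_Icc s t)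
      (fun u hu ↦ (hderiv u hu).continuousAt.continuousWithinAt)
      (fun u hu ↦ (hderiv u (interior_subset hu)).differentiableAt.differentiableWithinAt)
      fun u hu ↦ ?_
    have hu := interior_subset hu
    have hfu := hpos u hu
    rw [(hderiv u hu).deriv, sub_nonneg, rpow_neg hfu.le, ← div_eq_mul_inv]
    exact half_mul_le_deriv_mul_div hν (rpow_pos_of_pos hfu ν) (hineq u hu) (hlarge u hu)
  have := hmono ⟨le_rfl, hst⟩ ⟨hst, le_rfl⟩ hst
  simp only at this
  linarith

end Ghidaglia

/-- Uniform-in-initial-data bound from the Ghidaglia inequality, with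
`ν = (k₀+p)/(k₀+2)`. -/
theorem uniform_bound_from_ghidaglia (k₀ p a b τ : ℝ)
    (hp : 2 < p) (hk₀ : 0 ≤ k₀) (ha : 0 < a) (hb : 0 < b) (hτ : 0 < τ) :
    ∃ c : ℝ, ∀ y : ℝ → ℝ,
      (∀ t, 0 < t → 0 < y t) →
      (∀ t, 0 < t → DifferentiableAt ℝ y t) →
      (∀ t, 0 < t → deriv y t + a * (y t) ^ ((k₀ + p) / (k₀ + 2)) ≤ b) →
      ∀ t, τ ≤ t → y t ≤ c := by
  set ν := (k₀ + p) / (k₀ + 2)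
  have hν : 1 < ν := (one_lt_div (by linarith)).mpr (by linarith)
  set m := (ν - 1) * a / 2
  have hm : 0 < m := by have := sub_pos.2 hν; positivity
  set K := (2 * b / a) ^ ν⁻¹
  have hlarge : ∀ x, K ≤ x → 2 * b ≤ a * x ^ ν := fun x hx ↦ by
    have := rpow_le_rpow (by positivity) hx (by linarith : 0 ≤ ν)
    rwa [rpow_inv_rpow (by positivity) (by linarith), div_le_iff₀' ha] at this
  refine ⟨max K ((m * τ / 2) ^ (1 - ν)⁻¹), fun y hpos hdiff hineq t ht ↦ ?_⟩
  have hIcc_pos : ∀ u ∈ Icc (t / 2) t, 0 < u := fun u hu ↦ by linarith [hu.1]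
  by_cases hdip : ∃ s ∈ Icc (t / 2) t, y s ≤ K
  · obtain ⟨s, hs, hys⟩ := hdip
    refine le_max_of_le_left (le_of_deriv_neg_at_level hs.2
      (fun u hu ↦ hdiff u (hIcc_pos u ⟨hs.1.trans hu.1, hu.2⟩)) (fun u hu hyu ↦ ?_) hys)
    have hu : 0 < u := hIcc_pos u ⟨hs.1.trans hu.1, hu.2.le⟩
    linarith [hineq u hu, hlarge (y u) hyu.ge]
  · push Not at hdip
    have hdecay : m * (t - t / 2) ≤ y t ^ (1 - ν) - y (t / 2) ^ (1 - ν) :=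
      sub_mul_le_rpow_one_sub_sub hν (by linarith) (fun u hu ↦ hpos u (hIcc_pos u hu))
        (fun u hu ↦ hdiff u (hIcc_pos u hu)) (fun u hu ↦ hineq u (hIcc_pos u hu))
        (fun u hu ↦ hlarge (y u) (hdip u hu).le)
    have hy_half := rpow_pos_of_pos (hpos (t / 2) (hIcc_pos _ ⟨le_rfl, by linarith⟩)) (1 - ν)
    refine le_max_of_le_right ((le_rpow_inv_iff_of_neg (hpos t (by linarith)) (by positivity)
      (by linarith)).2 ?_)
    linarith [mul_le_mul_of_nonneg_left ht hm.le]
end
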